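/- For every normalized $y \in L^2[0,\infty) \cap C^2[0,\infty)$ with $\|y\|_{L^2}=1$ (and $y$, $y'$ decaying suitably at infinity), $\int_0^\infty [-2h y'(h)^2 - h y(h)^2]\,dh \le -\sqrt{2}$. -/

import Mathlib

open MeasureTheory Set Filter

/-!
Completing the square, `-2h y'² - h y² = -2h (y' + y/√2)² + √2 h (y²)' ≤ √2 h (y²)'` for `h ≥ 0`,
and integrating `h (y²)'` by parts (the boundary term `h y²` vanishes at both ends) turns the
right-hand side into `-√2 ∫ y² = -√2`.
-/

theorem neg_two_mul_sq_sub_mul_sq_le {h : ℝ} (hh : 0 ≤ h) (a b : ℝ) :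
    -2 * h * a ^ 2 - h * b ^ 2 ≤ 2 * Real.sqrt 2 * (h * b * a) := by
  have hsq : Real.sqrt 2 ^ 2 = 2 := Real.sq_sqrt zero_le_two
  have hsquare : 0 ≤ h * (Real.sqrt 2 * a + b) ^ 2 := mul_nonneg hh (sq_nonneg _)
  have hexpand : h * (Real.sqrt 2 * a + b) ^ 2
      = 2 * h * a ^ 2 + h * b ^ 2 + 2 * Real.sqrt 2 * (h * b * a) := by
    rw [add_sq, mul_pow, hsq]; ring
  linarith

theorem hasDerivAt_mul_sq {y : ℝ → ℝ} {x : ℝ} (hy : DifferentiableAt ℝ y x) :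
    HasDerivAt (fun h => h * y h ^ 2) (y x ^ 2 + x * (2 * y x * deriv y x)) x := by
  have hsq : HasDerivAt (fun h => y h ^ 2) (2 * y x * deriv y x) x := by
    simpa [mul_comm] using hy.hasDerivAt.fun_pow 2
  simpa using (hasDerivAt_id x).fun_mul hsq

theorem integral_Ioi_mul_mul_deriv {y : ℝ → ℝ} (hy : Differentiable ℝ y)
    (hL2 : IntegrableOn (fun h => y h ^ 2) (Ioi 0))
    (hcross : IntegrableOn (fun h => h * y h * deriv y h) (Ioi 0))
    (hdecay : Tendsto (fun h => h * y h ^ 2) atTop (nhds 0)) :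
    ∫ h in Ioi (0 : ℝ), h * y h * deriv y h = -(1 / 2) * ∫ h in Ioi (0 : ℝ), y h ^ 2 := by
  have hcross' : IntegrableOn (fun h => h * (2 * y h * deriv y h)) (Ioi 0) := by
    exact IntegrableOn.congr_fun (hcross.const_mul 2) (fun h _ => by ring) measurableSet_Ioi
  have hparts : ∫ h in Ioi (0 : ℝ), (y h ^ 2 + h * (2 * y h * deriv y h)) = 0 := by
    have hcont : ContinuousWithinAt (fun h => h * y h ^ 2) (Ici 0) 0 :=
      (continuous_id.mul (hy.continuous.pow 2)).continuousWithinAt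
    simpa using integral_Ioi_of_hasDerivAt_of_tendsto hcont
      (fun x _ => hasDerivAt_mul_sq (hy x)) (hL2.add hcross') hdecay
  have htwice : ∫ h in Ioi (0 : ℝ), h * (2 * y h * deriv y h)
      = 2 * ∫ h in Ioi (0 : ℝ), h * y h * deriv y h := by
    rw [← integral_const_mul]
    exact integral_congr_ae (Eventually.of_forall fun h => by ring)
  rw [integral_add hL2 hcross', htwice] at hparts
  linarith

/-- Upper bound half of the variational computation: every normalized `C²` function `y`
on `[0,∞)` (with suitable decay) satisfies `∫_0^∞ [-2h y'(h)² - h y(h)²] dh ≤ -√2`. -/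
theorem stmt4 (y : ℝ → ℝ) (hy : ContDiff ℝ 2 y)
    (hL2 : IntegrableOn (fun h => (y h) ^ 2) (Ioi 0))
    (hnorm : (∫ h in Ioi (0:ℝ), (y h) ^ 2) = 1)
    (hint : IntegrableOn (fun h => -2 * h * (deriv y h) ^ 2 - h * (y h) ^ 2) (Ioi 0))
    (hcross : IntegrableOn (fun h => h * y h * deriv y h) (Ioi 0))
    (hdecay : Tendsto (fun h => h * (y h) ^ 2) atTop (nhds 0)) :
    (∫ h in Ioi (0:ℝ), (-2 * h * (deriv y h) ^ 2 - h * (y h) ^ 2)) ≤ -Real.sqrt 2 := by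
  have hcross_eq : ∫ h in Ioi (0 : ℝ), h * y h * deriv y h = -(1 / 2) := by
    rw [integral_Ioi_mul_mul_deriv (hy.differentiable (by norm_num)) hL2 hcross hdecay, hnorm]
    ring
  calc (∫ h in Ioi (0:ℝ), (-2 * h * (deriv y h) ^ 2 - h * (y h) ^ 2))
      ≤ ∫ h in Ioi (0 : ℝ), 2 * Real.sqrt 2 * (h * y h * deriv y h) :=
        setIntegral_mono_on hint (hcross.const_mul _) measurableSet_Ioi
          fun h hh => neg_two_mul_sq_sub_mul_sq_le (le_of_lt hh) _ _
    _ = -Real.sqrt 2 := by rw [integral_const_mul, hcross_eq]; ring
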